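/- Let Z > 0, c₀ > 0, M > 0, and let σ_t, σ_s : [0,Z] → ℝ be continuous with 0 ≤ σ_s(z), σ_t(z) ≤ M, and σ_t(z) − σ_s(z) ≥ c₀ for all z ∈ [0,Z]. Let v : ℝ × ℝ → ℝ be such that v and ∂_z v are continuous on [0,Z] × [0,1]. Define a(v,v) := ∫₀^Z ∫₀¹ (μ²/σ_t(z))·(∂_z v)² dμ dz + ∫₀^Z ∫₀¹ σ_t(z)·v² dμ dz − ∫₀^Z σ_s(z)·( ∫₀¹ v(z,μ) dμ )² dz + ∫₀¹ μ·(v(0,μ)² + v(Z,μ)²) dμ. Then a(v,v) ≥ min{1/M, c₀/2} · ( ∫₀^Z ∫₀¹ μ²·(∂_z v)² dμ dz + ∫₀^Z ∫₀¹ (1+μ²)·v² dμ dz ). -/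
import Mathlib


open MeasureTheory

lemma sq_intervalIntegral_le (f : ℝ → ℝ) (hf : Continuous f) :
    (∫ μ in (0:ℝ)..1, f μ) ^ 2 ≤ ∫ μ in (0:ℝ)..1, f μ ^ 2 := by
  rw [intervalIntegral.integral_of_le zero_le_one,
      intervalIntegral.integral_of_le zero_le_one]
  haveI : IsProbabilityMeasure (volume.restrict (Set.Ioc (0:ℝ) 1)) := ⟨by simp⟩
  have hconv : ConvexOn ℝ Set.univ fun x : ℝ => x ^ 2 := Even.convexOn_pow even_two
  exact hconv.map_integral_le (by fun_prop) isClosed_univ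
    (Filter.Eventually.of_forall fun _ => trivial)
    (hf.integrableOn_Ioc) ((hf.pow 2).integrableOn_Ioc)

lemma exists_cont_ext {X : Type*} [TopologicalSpace X] [NormalSpace X]
    {s : Set X} (hs : IsClosed s) (f : X → ℝ) (hf : ContinuousOn f s) :
    ∃ g : X → ℝ, Continuous g ∧ ∀ x ∈ s, g x = f x := by
  obtain ⟨g, hg⟩ := ContinuousMap.exists_restrict_eq (Y := ℝ) hs ⟨s.restrict f, hf.restrict⟩
  exact ⟨g, g.continuous, fun x hx => ContinuousMap.congr_fun hg ⟨x, hx⟩⟩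

/-- Coercivity bound (Lemma 2.2, lower bound) for the even-parity bilinear form
of the radiative transfer equation in slab geometry on `Ω = (0,Z) × (0,1)`. -/
theorem even_parity_form_coercive
    (Z c₀ M : ℝ) (hZ : 0 < Z) (hc₀ : 0 < c₀) (hM : 0 < M)
    (σt σs : ℝ → ℝ)
    (hσt : ContinuousOn σt (Set.Icc 0 Z)) (hσs : ContinuousOn σs (Set.Icc 0 Z))
    (hσs_nonneg : ∀ z ∈ Set.Icc (0:ℝ) Z, 0 ≤ σs z)
    (hσt_le : ∀ z ∈ Set.Icc (0:ℝ) Z, σt z ≤ M)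
    (habs : ∀ z ∈ Set.Icc (0:ℝ) Z, c₀ ≤ σt z - σs z)
    (v vz : ℝ × ℝ → ℝ)
    (hv : ContinuousOn v (Set.Icc 0 Z ×ˢ Set.Icc 0 1))
    (hvz : ContinuousOn vz (Set.Icc 0 Z ×ˢ Set.Icc 0 1))
    (hderiv : ∀ z ∈ Set.Icc (0:ℝ) Z, ∀ μ ∈ Set.Icc (0:ℝ) 1,
      HasDerivWithinAt (fun t => v (t, μ)) (vz (z, μ)) (Set.Icc 0 Z) z) :
    min (1 / M) (c₀ / 2) *
      ((∫ z in (0:ℝ)..Z, ∫ μ in (0:ℝ)..1, μ ^ 2 * vz (z, μ) ^ 2) +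
       (∫ z in (0:ℝ)..Z, ∫ μ in (0:ℝ)..1, (1 + μ ^ 2) * v (z, μ) ^ 2)) ≤
    (∫ z in (0:ℝ)..Z, ∫ μ in (0:ℝ)..1, (μ ^ 2 / σt z) * vz (z, μ) ^ 2) +
      (∫ z in (0:ℝ)..Z, ∫ μ in (0:ℝ)..1, σt z * v (z, μ) ^ 2) -
      (∫ z in (0:ℝ)..Z, σs z * (∫ μ in (0:ℝ)..1, v (z, μ)) ^ 2) +
      (∫ μ in (0:ℝ)..1, μ * (v (0, μ) ^ 2 + v (Z, μ) ^ 2)) := by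
  set m := min (1 / M) (c₀ / 2) with hm
  have hm0 : 0 ≤ m := le_min (by positivity) (by positivity)
  have hmM : m ≤ 1 / M := min_le_left _ _
  have hmc : m ≤ c₀ / 2 := min_le_right _ _
  have hK : IsClosed (Set.Icc (0:ℝ) Z ×ˢ Set.Icc (0:ℝ) 1) := (isClosed_Icc).prod isClosed_Icc
  obtain ⟨V, hVc, hVeq⟩ := exists_cont_ext hK v hv
  obtain ⟨W, hWc, hWeq⟩ := exists_cont_ext hK vz hvz
  obtain ⟨St0, hSt0c, hSt0eq⟩ := exists_cont_ext isClosed_Icc σt hσt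
  obtain ⟨Ss, hSsc, hSseq⟩ := exists_cont_ext isClosed_Icc σs hσs
  set St : ℝ → ℝ := fun z => max c₀ (St0 z) with hStdef
  have hStc : Continuous St := continuous_const.max hSt0c
  have hStpos : ∀ z, 0 < St z := fun z => lt_of_lt_of_le hc₀ (le_max_left _ _)
  have hSteq : ∀ z ∈ Set.Icc (0:ℝ) Z, St z = σt z := by
    intro z hz
    have h1 : c₀ ≤ σt z := le_trans (habs z hz) (by nlinarith [hσs_nonneg z hz])
    simp [hStdef, hSt0eq z hz, max_eq_right h1]
  have hmem : ∀ z ∈ Set.Icc (0:ℝ) Z, ∀ μ ∈ Set.Icc (0:ℝ) 1,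
      (z, μ) ∈ Set.Icc (0:ℝ) Z ×ˢ Set.Icc (0:ℝ) 1 := fun z hz μ hμ => ⟨hz, hμ⟩
  have huZ : Set.uIcc (0:ℝ) Z = Set.Icc 0 Z := Set.uIcc_of_le hZ.le
  have hu1 : Set.uIcc (0:ℝ) 1 = Set.Icc 0 1 := Set.uIcc_of_le zero_le_one
  have e1 : (∫ z in (0:ℝ)..Z, ∫ μ in (0:ℝ)..1, μ ^ 2 * vz (z, μ) ^ 2)
      = ∫ z in (0:ℝ)..Z, ∫ μ in (0:ℝ)..1, μ ^ 2 * W (z, μ) ^ 2 := by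
    apply intervalIntegral.integral_congr
    intro z hz; rw [huZ] at hz
    apply intervalIntegral.integral_congr
    intro μ hμ; rw [hu1] at hμ
    show μ ^ 2 * vz (z, μ) ^ 2 = μ ^ 2 * W (z, μ) ^ 2
    rw [hWeq _ (hmem z hz μ hμ)]
  have e2 : (∫ z in (0:ℝ)..Z, ∫ μ in (0:ℝ)..1, (1 + μ ^ 2) * v (z, μ) ^ 2)
      = ∫ z in (0:ℝ)..Z, ∫ μ in (0:ℝ)..1, (1 + μ ^ 2) * V (z, μ) ^ 2 := by
    apply intervalIntegral.integral_congr
    intro z hz; rw [huZ] at hz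
    apply intervalIntegral.integral_congr
    intro μ hμ; rw [hu1] at hμ
    show (1 + μ ^ 2) * v (z, μ) ^ 2 = (1 + μ ^ 2) * V (z, μ) ^ 2
    rw [hVeq _ (hmem z hz μ hμ)]
  have e3 : (∫ z in (0:ℝ)..Z, ∫ μ in (0:ℝ)..1, (μ ^ 2 / σt z) * vz (z, μ) ^ 2)
      = ∫ z in (0:ℝ)..Z, ∫ μ in (0:ℝ)..1, (μ ^ 2 / St z) * W (z, μ) ^ 2 := by
    apply intervalIntegral.integral_congr
    intro z hz; rw [huZ] at hz
    apply intervalIntegral.integral_congr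
    intro μ hμ; rw [hu1] at hμ
    show (μ ^ 2 / σt z) * vz (z, μ) ^ 2 = (μ ^ 2 / St z) * W (z, μ) ^ 2
    rw [hWeq _ (hmem z hz μ hμ), hSteq z hz]
  have e4 : (∫ z in (0:ℝ)..Z, ∫ μ in (0:ℝ)..1, σt z * v (z, μ) ^ 2)
      = ∫ z in (0:ℝ)..Z, ∫ μ in (0:ℝ)..1, St z * V (z, μ) ^ 2 := by
    apply intervalIntegral.integral_congr
    intro z hz; rw [huZ] at hz
    apply intervalIntegral.integral_congr
    intro μ hμ; rw [hu1] at hμ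
    show σt z * v (z, μ) ^ 2 = St z * V (z, μ) ^ 2
    rw [hVeq _ (hmem z hz μ hμ), hSteq z hz]
  have e5 : (∫ z in (0:ℝ)..Z, σs z * (∫ μ in (0:ℝ)..1, v (z, μ)) ^ 2)
      = ∫ z in (0:ℝ)..Z, Ss z * (∫ μ in (0:ℝ)..1, V (z, μ)) ^ 2 := by
    apply intervalIntegral.integral_congr
    intro z hz; rw [huZ] at hz
    show σs z * (∫ μ in (0:ℝ)..1, v (z, μ)) ^ 2 = Ss z * (∫ μ in (0:ℝ)..1, V (z, μ)) ^ 2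
    rw [hSseq z hz]
    congr 2
    apply intervalIntegral.integral_congr
    intro μ hμ; rw [hu1] at hμ
    show v (z, μ) = V (z, μ)
    rw [hVeq _ (hmem z hz μ hμ)]
  rw [e1, e2, e3, e4, e5]
  have hbd : 0 ≤ ∫ μ in (0:ℝ)..1, μ * (v (0, μ) ^ 2 + v (Z, μ) ^ 2) := by
    apply intervalIntegral.integral_nonneg zero_le_one
    intro μ hμ
    have : 0 ≤ μ := hμ.1
    positivity
  have hF1c : Continuous fun z => ∫ μ in (0:ℝ)..1, μ ^ 2 * W (z, μ) ^ 2 := by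
    apply intervalIntegral.continuous_parametric_intervalIntegral_of_continuous'
    show Continuous fun p : ℝ × ℝ => p.2 ^ 2 * W p ^ 2
    fun_prop
  have hF2c : Continuous fun z => ∫ μ in (0:ℝ)..1, (1 + μ ^ 2) * V (z, μ) ^ 2 := by
    apply intervalIntegral.continuous_parametric_intervalIntegral_of_continuous'
    show Continuous fun p : ℝ × ℝ => (1 + p.2 ^ 2) * V p ^ 2
    fun_prop
  have hG1c : Continuous fun z => ∫ μ in (0:ℝ)..1, (μ ^ 2 / St z) * W (z, μ) ^ 2 := by
    apply intervalIntegral.continuous_parametric_intervalIntegral_of_continuous'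
    show Continuous fun p : ℝ × ℝ => (p.2 ^ 2 / St p.1) * W p ^ 2
    exact ((continuous_snd.pow 2).div (hStc.comp continuous_fst)
      (fun p => (hStpos p.1).ne')).mul (hWc.pow 2)
  have hG2c : Continuous fun z => ∫ μ in (0:ℝ)..1, St z * V (z, μ) ^ 2 := by
    apply intervalIntegral.continuous_parametric_intervalIntegral_of_continuous'
    show Continuous fun p : ℝ × ℝ => St p.1 * V p ^ 2
    fun_prop
  have hIVc : Continuous fun z => ∫ μ in (0:ℝ)..1, V (z, μ) := by
    apply intervalIntegral.continuous_parametric_intervalIntegral_of_continuous'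
    exact hVc
  have hG3c : Continuous fun z => Ss z * (∫ μ in (0:ℝ)..1, V (z, μ)) ^ 2 :=
    hSsc.mul (hIVc.pow 2)
  -- step 1
  have step1 : m * (∫ z in (0:ℝ)..Z, ∫ μ in (0:ℝ)..1, μ ^ 2 * W (z, μ) ^ 2)
      ≤ ∫ z in (0:ℝ)..Z, ∫ μ in (0:ℝ)..1, (μ ^ 2 / St z) * W (z, μ) ^ 2 := by
    rw [← intervalIntegral.integral_const_mul]
    have i1 : IntervalIntegrable
        (fun z => m * ∫ μ in (0:ℝ)..1, μ ^ 2 * W (z, μ) ^ 2) volume 0 Z :=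
      (continuous_const.mul hF1c).intervalIntegrable 0 Z
    apply intervalIntegral.integral_mono_on hZ.le i1 (hG1c.intervalIntegrable 0 Z)
    intro z hz
    rw [← intervalIntegral.integral_const_mul]
    have i2 : IntervalIntegrable (fun μ => m * (μ ^ 2 * W (z, μ) ^ 2)) volume 0 1 :=
      (Continuous.intervalIntegrable (by fun_prop) 0 1)
    have i3 : IntervalIntegrable (fun μ => (μ ^ 2 / St z) * W (z, μ) ^ 2) volume 0 1 := by
      apply Continuous.intervalIntegrable
      exact ((continuous_id.pow 2).div continuous_const (fun _ => (hStpos z).ne')).mul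
        ((hWc.comp (Continuous.prodMk_right z)).pow 2)
    apply intervalIntegral.integral_mono_on zero_le_one i2 i3
    intro μ hμ
    have hStM : St z ≤ M := by rw [hSteq z hz]; exact hσt_le z hz
    have h1 : m ≤ 1 / St z := le_trans hmM (one_div_le_one_div_of_le (hStpos z) hStM)
    calc m * (μ ^ 2 * W (z, μ) ^ 2) ≤ (1 / St z) * (μ ^ 2 * W (z, μ) ^ 2) :=
          mul_le_mul_of_nonneg_right h1 (by positivity)
      _ = (μ ^ 2 / St z) * W (z, μ) ^ 2 := by ring
  -- step 2
  have step2 : m * (∫ z in (0:ℝ)..Z, ∫ μ in (0:ℝ)..1, (1 + μ ^ 2) * V (z, μ) ^ 2)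
      + (∫ z in (0:ℝ)..Z, Ss z * (∫ μ in (0:ℝ)..1, V (z, μ)) ^ 2)
      ≤ ∫ z in (0:ℝ)..Z, ∫ μ in (0:ℝ)..1, St z * V (z, μ) ^ 2 := by
    have i1 : IntervalIntegrable
        (fun z => m * ∫ μ in (0:ℝ)..1, (1 + μ ^ 2) * V (z, μ) ^ 2) volume 0 Z :=
      (continuous_const.mul hF2c).intervalIntegrable 0 Z
    have i2 : IntervalIntegrable
        (fun z => Ss z * (∫ μ in (0:ℝ)..1, V (z, μ)) ^ 2) volume 0 Z :=
      hG3c.intervalIntegrable 0 Z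
    rw [← intervalIntegral.integral_const_mul, ← intervalIntegral.integral_add i1 i2]
    apply intervalIntegral.integral_mono_on hZ.le ((i1.add i2))
      (hG2c.intervalIntegrable 0 Z)
    intro z hz
    have hVzc : Continuous fun μ => V (z, μ) := hVc.comp (Continuous.prodMk_right z)
    have hSsz : 0 ≤ Ss z := by rw [hSseq z hz]; exact hσs_nonneg z hz
    have hcs : Ss z * (∫ μ in (0:ℝ)..1, V (z, μ)) ^ 2
        ≤ Ss z * ∫ μ in (0:ℝ)..1, V (z, μ) ^ 2 :=
      mul_le_mul_of_nonneg_left (sq_intervalIntegral_le _ hVzc) hSsz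
    have key : (∫ μ in (0:ℝ)..1, m * ((1 + μ ^ 2) * V (z, μ) ^ 2))
        + (∫ μ in (0:ℝ)..1, Ss z * V (z, μ) ^ 2)
        ≤ ∫ μ in (0:ℝ)..1, St z * V (z, μ) ^ 2 := by
      have j1 : IntervalIntegrable
          (fun μ => m * ((1 + μ ^ 2) * V (z, μ) ^ 2)) volume 0 1 :=
        Continuous.intervalIntegrable (by fun_prop) 0 1
      have j2 : IntervalIntegrable (fun μ => Ss z * V (z, μ) ^ 2) volume 0 1 :=
        Continuous.intervalIntegrable (by fun_prop) 0 1
      have j3 : IntervalIntegrable (fun μ => St z * V (z, μ) ^ 2) volume 0 1 :=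
        Continuous.intervalIntegrable (by fun_prop) 0 1
      rw [← intervalIntegral.integral_add j1 j2]
      apply intervalIntegral.integral_mono_on zero_le_one (j1.add j2) j3
      intro μ hμ
      have hμ1 : μ ≤ 1 := hμ.2
      have hμ0 : 0 ≤ μ := hμ.1
      have habsz : c₀ ≤ σt z - σs z := habs z hz
      have h3 : St z - Ss z = σt z - σs z := by rw [hSteq z hz, hSseq z hz]
      have h2 : m * (1 + μ ^ 2) ≤ c₀ := by
        have h4 : (1:ℝ) + μ ^ 2 ≤ 2 := by nlinarith
        calc m * (1 + μ ^ 2) ≤ (c₀ / 2) * (1 + μ ^ 2) :=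
              mul_le_mul_of_nonneg_right hmc (by positivity)
          _ ≤ (c₀ / 2) * 2 := by nlinarith
          _ = c₀ := by ring
      have hV2 : 0 ≤ V (z, μ) ^ 2 := sq_nonneg _
      nlinarith [mul_le_mul_of_nonneg_right h2 hV2]
    have hm2 : m * (∫ μ in (0:ℝ)..1, (1 + μ ^ 2) * V (z, μ) ^ 2)
        = ∫ μ in (0:ℝ)..1, m * ((1 + μ ^ 2) * V (z, μ) ^ 2) :=
      (intervalIntegral.integral_const_mul m _).symm
    show m * (∫ μ in (0:ℝ)..1, (1 + μ ^ 2) * V (z, μ) ^ 2)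
        + Ss z * (∫ μ in (0:ℝ)..1, V (z, μ)) ^ 2
        ≤ ∫ μ in (0:ℝ)..1, St z * V (z, μ) ^ 2
    have hm3 : (∫ μ in (0:ℝ)..1, Ss z * V (z, μ) ^ 2)
        = Ss z * ∫ μ in (0:ℝ)..1, V (z, μ) ^ 2 :=
      intervalIntegral.integral_const_mul _ _
    linarith [hcs, key, hm2.le, hm2.ge, hm3.le, hm3.ge]
  linarith [step1, step2, hbd]
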